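/- arXiv:2101.02150 — 2 statements merged into one kernel-verified Lean document; each statement's English description precedes it below -/
import Mathlib

section
/- Let A be a nearly free line arrangement in ℂ³ with exponents (a, b), a ≤ b. Then for every H ∈ A, n_H ≤ b + 1. -/
/-!
Restrict logarithmic derivations to the line `H = {α_H = 0}`. Every `θ ∈ D(A)` is tangent to `H`,
so `θ|_H` is a derivation of the coordinate ring `ℂ[s,t]` of `H`, and `det(θ|_H, θ_E)` is a
binary form of degree `deg θ + 1`. For `H' ∈ A`, `H' ≠ H`, the condition `θ(α_{H'}) ∈ (α_{H'})`
makes `α_{H'}|_H`, the linear form vanishing at the point `H ∩ H'`, divide this determinant.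
Hence `n_H ≤ deg θ + 1` as soon as the determinant is nonzero. It vanishes for `θ_E` but not for
`(∏_{H' ≠ H} α_{H'}) ∂_β` with `β ∈ H`, so it is nonzero for one of the generators `θ₂, θ₃, φ`,
all of degree at most `b`.
-/

noncomputable section

open MvPolynomial

/-- The polynomial ring `S = ℂ[x,y,z]`. -/
abbrev S3 : Type := MvPolynomial (Fin 3) ℂ
/-- The polynomial ring in two variables, coordinate ring of a plane `H`. -/
abbrev S2 : Type := MvPolynomial (Fin 2) ℂ

/-- The linear form with coefficient vector `v`. -/
def lin3 (v : Fin 3 → ℂ) : S3 := ∑ i, MvPolynomial.C (v i) * MvPolynomial.X i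
/-- The linear form with coefficient vector `u` in two variables. -/
def lin2 (u : Fin 2 → ℂ) : S2 := ∑ i, MvPolynomial.C (u i) * MvPolynomial.X i

/-- Value of the derivation `θ = ∑ θᵢ ∂ᵢ` on the linear form with coefficients `v`. -/
def ev3 (θ : Fin 3 → S3) (v : Fin 3 → ℂ) : S3 := ∑ i, MvPolynomial.C (v i) * θ i
/-- Two-variable analogue of `ev3`. -/
def ev2 (θ : Fin 2 → S2) (u : Fin 2 → ℂ) : S2 := ∑ i, MvPolynomial.C (u i) * θ i

lemma ev3_add (θ η : Fin 3 → S3) (v : Fin 3 → ℂ) :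
    ev3 (θ + η) v = ev3 θ v + ev3 η v := by
  simp [ev3, mul_add, Finset.sum_add_distrib]

lemma ev3_smul (c : S3) (θ : Fin 3 → S3) (v : Fin 3 → ℂ) :
    ev3 (c • θ) v = c * ev3 θ v := by
  simp only [ev3, Pi.smul_apply, smul_eq_mul, Finset.mul_sum]
  exact Finset.sum_congr rfl fun i _ => by ring

lemma ev2_add (θ η : Fin 2 → S2) (u : Fin 2 → ℂ) :
    ev2 (θ + η) u = ev2 θ u + ev2 η u := by
  simp [ev2, mul_add, Finset.sum_add_distrib]

lemma ev2_smul (c : S2) (θ : Fin 2 → S2) (u : Fin 2 → ℂ) :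
    ev2 (c • θ) u = c * ev2 θ u := by
  simp only [ev2, Pi.smul_apply, smul_eq_mul, Finset.mul_sum]
  exact Finset.sum_congr rfl fun i _ => by ring

/-- A central line arrangement in `ℂ³`, given by the coefficient vectors of the defining
linear forms of its planes; the forms are nonzero and pairwise non-proportional. -/
structure Arr where
  hyps : Finset (Fin 3 → ℂ)
  forms_ne : ∀ v ∈ hyps, v ≠ 0
  nonprop : ∀ v ∈ hyps, ∀ w ∈ hyps, (∃ c : ℂ, w = c • v) → w = v

/-- The module `D(A)` of logarithmic derivations of the arrangement `A`, as a submodule of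
`Der S = S ∂x ⊕ S ∂y ⊕ S ∂z` (a derivation is recorded by its coefficient triple). -/
def DA (A : Arr) : Submodule S3 (Fin 3 → S3) where
  carrier := {θ | ∀ v ∈ A.hyps, lin3 v ∣ ev3 θ v}
  add_mem' := fun hθ hη v hv => by rw [ev3_add]; exact dvd_add (hθ v hv) (hη v hv)
  zero_mem' := fun v hv => by simp [ev3]
  smul_mem' := fun c θ hθ v hv => by rw [ev3_smul]; exact Dvd.dvd.mul_left (hθ v hv) c

/-- The Euler derivation `θ_E = x ∂x + y ∂y + z ∂z`. -/
def eulerD : Fin 3 → S3 := fun i => MvPolynomial.X i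

/-- The submodule `D_H(A) = {θ ∈ D(A) | θ(α_H) = 0}`, where `H` has coefficient vector `v`. -/
def DH (A : Arr) (v : Fin 3 → ℂ) : Submodule S3 (Fin 3 → S3) where
  carrier := {θ | (∀ w ∈ A.hyps, lin3 w ∣ ev3 θ w) ∧ ev3 θ v = 0}
  add_mem' := fun hθ hη => ⟨fun w hw => by rw [ev3_add]; exact dvd_add (hθ.1 w hw) (hη.1 w hw),
    by rw [ev3_add, hθ.2, hη.2, add_zero]⟩
  zero_mem' := ⟨fun w hw => by simp [ev3], by simp [ev3]⟩
  smul_mem' := fun c θ hθ => ⟨fun w hw => by rw [ev3_smul]; exact Dvd.dvd.mul_left (hθ.1 w hw) c,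
    by rw [ev3_smul, hθ.2, mul_zero]⟩

/-- A derivation is homogeneous of (polynomial) degree `k` if all its coefficients are. -/
def HomDeg3 (θ : Fin 3 → S3) (k : ℕ) : Prop := ∀ i, (θ i).IsHomogeneous k
/-- Two-variable analogue of `HomDeg3`. -/
def HomDeg2 (θ : Fin 2 → S2) (k : ℕ) : Prop := ∀ i, (θ i).IsHomogeneous k

/-- `A` is plus-one generated with exponents `(a, b)` and level `d`: `D(A)` has a minimal
homogeneous generating set `{θ_E, θ₂, θ₃, φ}` of degrees `1, a, b, d` with a unique
homogeneous relation `f₁θ_E + f₂θ₂ + f₃θ₃ + αφ = 0`, `α` a nonzero linear form. -/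
def IsPOG (A : Arr) (a b d : ℕ) : Prop :=
  ∃ θ₂ θ₃ φ : Fin 3 → S3,
    HomDeg3 θ₂ a ∧ HomDeg3 θ₃ b ∧ HomDeg3 φ d ∧
    Submodule.span S3 ({eulerD, θ₂, θ₃, φ} : Set (Fin 3 → S3)) = DA A ∧
    eulerD ∉ Submodule.span S3 ({θ₂, θ₃, φ} : Set (Fin 3 → S3)) ∧
    θ₂ ∉ Submodule.span S3 ({eulerD, θ₃, φ} : Set (Fin 3 → S3)) ∧
    θ₃ ∉ Submodule.span S3 ({eulerD, θ₂, φ} : Set (Fin 3 → S3)) ∧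
    φ ∉ Submodule.span S3 ({eulerD, θ₂, θ₃} : Set (Fin 3 → S3)) ∧
    ∃ f₁ f₂ f₃ α : S3, α ≠ 0 ∧ α.IsHomogeneous 1 ∧
      f₁ • eulerD + f₂ • θ₂ + f₃ • θ₃ + α • φ = 0 ∧
      ∀ g₁ g₂ g₃ g₄ : S3,
        g₁ • eulerD + g₂ • θ₂ + g₃ • θ₃ + g₄ • φ = 0 →
        ∃ h : S3, g₁ = h * f₁ ∧ g₂ = h * f₂ ∧ g₃ = h * f₃ ∧ g₄ = h * α

/-- `A` is nearly free with exponents `(a, b)`: plus-one generated with level `d = b`. -/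
def IsNearlyFree (A : Arr) (a b : ℕ) : Prop := IsPOG A a b b

/-- `A` is free with exponents `(1, a, b)`: `D(A)` has a homogeneous basis
`{θ_E, θ₁, θ₂}` of degrees `1, a, b`. -/
def IsFree (A : Arr) (a b : ℕ) : Prop :=
  ∃ θ₁ θ₂ : Fin 3 → S3, HomDeg3 θ₁ a ∧ HomDeg3 θ₂ b ∧
    Submodule.span S3 ({eulerD, θ₁, θ₂} : Set (Fin 3 → S3)) = DA A ∧
    ∀ f g h : S3, f • eulerD + g • θ₁ + h • θ₂ = 0 → f = 0 ∧ g = 0 ∧ h = 0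

/-- The projective plane `ℙ² = ℙ(ℂ³)`. -/
abbrev PP : Type := Projectivization ℂ (Fin 3 → ℂ)

/-- The projective point `p` lies on the line defined by the linear form with coefficients `v`. -/
def pOn (v : Fin 3 → ℂ) (p : PP) : Prop := ∑ i, v i * p.rep i = 0

/-- The number `n_H` of intersection points of `A` lying on the line `H` (coefficients `v`). -/
def nPoints (A : Arr) (v : Fin 3 → ℂ) : ℕ :=
  Set.ncard {p : PP | pOn v p ∧ ∃ w ∈ A.hyps, w ≠ v ∧ pOn w p}

/-- The multiplicity `m(X)` of a projective point: the number of lines of `A` through it. -/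
def multPt (A : Arr) (p : PP) : ℕ :=
  Set.ncard {w : Fin 3 → ℂ | w ∈ A.hyps ∧ pOn w p}

/-- The maximal multiplicity `m(A)` of an intersection point of `A`. -/
def mMax (A : Arr) : ℕ := ⨆ p : PP, multPt A p

/-- `b₂⁰(A)`, the constant coefficient of `χ₀(A,t) = χ(A,t)/(t-1) = t² - (|A|-1)t + b₂⁰(A)`. -/
def b20 (A : Arr) : ℕ := (∑ᶠ p : PP, (multPt A p - 1)) - (A.hyps.card - 1)

/-- Deletion of a hyperplane from an arrangement. -/
def Arr.delete (A : Arr) (v : Fin 3 → ℂ) : Arr where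
  hyps := A.hyps.erase v
  forms_ne := fun w hw => A.forms_ne w (Finset.mem_of_mem_erase hw)
  nonprop := fun w hw u hu h =>
    A.nonprop w (Finset.mem_of_mem_erase hw) u (Finset.mem_of_mem_erase hu) h

/-- The restriction of the linear form `w` to the plane with basis `b`. -/
def restrForm (b : Fin 2 → Fin 3 → ℂ) (w : Fin 3 → ℂ) : Fin 2 → ℂ :=
  fun j => ∑ i, w i * b j i

/-- The Ziegler multiplicity of the point `H ∩ H_w` on the line `H` (coefficients `v`):
the number of hyperplanes of `A` other than `H` passing through this point. -/
def multOn (A : Arr) (v : Fin 3 → ℂ) (b : Fin 2 → Fin 3 → ℂ) (w : Fin 3 → ℂ) : ℕ :=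
  Set.ncard {w' : Fin 3 → ℂ | w' ∈ A.hyps ∧ w' ≠ v ∧
    ∃ c : ℂ, restrForm b w' = c • restrForm b w}

/-- The derivation module `D(A^H, m^H)` of the Ziegler (multi)restriction of `A` onto the
line with coefficients `v`, computed in the coordinates given by the basis `b` of `H`.
(For `v ∉ A` this is the multirestriction with multiplicities `m(X) = #{K ∈ A | X ⊂ K}`.) -/
def DZ (A : Arr) (v : Fin 3 → ℂ) (b : Fin 2 → Fin 3 → ℂ) : Submodule S2 (Fin 2 → S2) where
  carrier := {θ | ∀ w ∈ A.hyps, w ≠ v →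
    (lin2 (restrForm b w)) ^ (multOn A v b w) ∣ ev2 θ (restrForm b w)}
  add_mem' := fun hθ hη w hw hwv => by rw [ev2_add]; exact dvd_add (hθ w hw hwv) (hη w hw hwv)
  zero_mem' := fun w hw hwv => by simp [ev2]
  smul_mem' := fun c θ hθ w hw hwv => by rw [ev2_smul]; exact Dvd.dvd.mul_left (hθ w hw hwv) c

/-- `(e₁, e₂)` is the splitting type of the logarithmic bundle of `A` along the line `v`;
by Yoshinaga's theorem this is expressed through the exponents of the corresponding
(multi)restriction: `D(A^H, m^H)` has a homogeneous basis of degrees `e₁`, `e₂`. -/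
def SplitTypeIs (A : Arr) (v : Fin 3 → ℂ) (e₁ e₂ : ℕ) : Prop :=
  ∃ b : Fin 2 → (Fin 3 → ℂ), LinearIndependent ℂ b ∧ (∀ j, ∑ i, v i * b j i = 0) ∧
    ∃ θ₁ θ₂ : Fin 2 → S2, HomDeg2 θ₁ e₁ ∧ HomDeg2 θ₂ e₂ ∧
      Submodule.span S2 ({θ₁, θ₂} : Set (Fin 2 → S2)) = DZ A v b ∧
      ∀ f g : S2, f • θ₁ + g • θ₂ = 0 → f = 0 ∧ g = 0

/-- For `v ∈ A`, the splitting type along `v` is exactly the pair of exponents of the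
Ziegler restriction `(A^H, m^H)`. -/
abbrev ZieglerExpsAre (A : Arr) (v : Fin 3 → ℂ) (e₁ e₂ : ℕ) : Prop := SplitTypeIs A v e₁ e₂

/-- A generic line arrangement: all intersection points in `ℙ²` are double points. -/
def IsGeneric (A : Arr) : Prop := ∀ p : PP, multPt A p ≤ 2

lemma Set.ncard_le_of_forall_finset_card_le {α : Type*} {s : Set α} {n : ℕ}
    (h : ∀ t : Finset α, ↑t ⊆ s → t.card ≤ n) : s.ncard ≤ n := by
  by_contra! hlt
  have hs := Set.finite_of_ncard_pos (n.zero_le.trans_lt hlt)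
  exact hlt.not_ge (by simpa [Set.ncard_eq_toFinset_card _ hs] using h hs.toFinset (by simp))

lemma coeff_single_lin2 (u : Fin 2 → ℂ) (k : Fin 2) :
    coeff (Finsupp.single k 1) (lin2 u) = u k := by
  fin_cases k <;> simp [lin2, coeff_C_mul, coeff_X, Finsupp.single_eq_single_iff]

lemma lin2_injective : Function.Injective lin2 := fun u u' h =>
  funext fun k => by rw [← coeff_single_lin2 u, h, coeff_single_lin2]

lemma lin2_smul (c : ℂ) (u : Fin 2 → ℂ) : lin2 (c • u) = C c * lin2 u := by
  simp only [lin2, Pi.smul_apply, smul_eq_mul, map_mul, Finset.mul_sum, mul_assoc]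

lemma lin2_ne_zero {u : Fin 2 → ℂ} (hu : u ≠ 0) : lin2 u ≠ 0 := by
  simpa [lin2] using lin2_injective.ne hu

lemma isHomogeneous_lin2 (u : Fin 2 → ℂ) : (lin2 u).IsHomogeneous 1 :=
  IsHomogeneous.sum _ _ _ fun k _ => isHomogeneous_C_mul_X (u k) k

lemma irreducible_lin2 {u : Fin 2 → ℂ} (hu : u ≠ 0) : Irreducible (lin2 u) := by
  refine irreducible_of_totalDegree_eq_one ((isHomogeneous_lin2 u).totalDegree (lin2_ne_zero hu))
    fun x hx => ?_
  obtain ⟨k, hk⟩ := Function.ne_iff.mp hu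
  refine (ne_zero_of_dvd_ne_zero ?_ (hx (Finsupp.single k 1))).isUnit
  rwa [coeff_single_lin2]

lemma exists_eq_smul_of_lin2_dvd {u u' : Fin 2 → ℂ} (hu : u ≠ 0) (hu' : u' ≠ 0)
    (h : lin2 u ∣ lin2 u') : ∃ μ : ℂ, u' = μ • u := by
  obtain ⟨g, hg⟩ := h
  have hg_unit : IsUnit g :=
    ((irreducible_lin2 hu').isUnit_or_isUnit hg).resolve_left (irreducible_lin2 hu).not_isUnit
  obtain ⟨μ, -, rfl⟩ := isUnit_iff_eq_C_of_isReduced.mp hg_unit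
  exact ⟨μ, lin2_injective (by rw [hg, lin2_smul, mul_comm])⟩

lemma card_le_of_lin2_dvd {W : S2} {n : ℕ} (hW : W.IsHomogeneous n) (hW0 : W ≠ 0)
    {T : Finset (Fin 2 → ℂ)} (hT0 : ∀ u ∈ T, u ≠ 0)
    (hT : ∀ u ∈ T, ∀ u' ∈ T, ∀ μ : ℂ, u' = μ • u → u' = u) (hdvd : ∀ u ∈ T, lin2 u ∣ W) :
    T.card ≤ n := by
  have hprod : ∏ u ∈ T, lin2 u ∣ W := by
    refine Finset.prod_dvd_of_isRelPrime (fun u hu u' hu' hne => ?_) hdvd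
    refine (irreducible_lin2 (hT0 u hu)).isRelPrime_iff_not_dvd.mpr fun h => hne ?_
    obtain ⟨μ, hμ⟩ := exists_eq_smul_of_lin2_dvd (hT0 u hu) (hT0 u' hu') h
    exact (hT u hu u' hu' μ hμ).symm
  obtain ⟨Q, hQ⟩ := hprod
  have hprod0 : ∏ u ∈ T, lin2 u ≠ 0 :=
    Finset.prod_ne_zero_iff.mpr fun u hu => lin2_ne_zero (hT0 u hu)
  have hdeg : (∏ u ∈ T, lin2 u).totalDegree = T.card := by
    simpa using (IsHomogeneous.prod T lin2 (fun _ => 1) fun u _ => isHomogeneous_lin2 u).totalDegree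
      hprod0
  have hQ0 : Q ≠ 0 := by rintro rfl; exact hW0 (by rw [hQ, mul_zero])
  rw [← hW.totalDegree hW0, hQ, totalDegree_mul_of_isDomain hprod0 hQ0, hdeg]
  exact Nat.le_add_right _ _

/-- The determinant `det(η, θ_E)` of a derivation `η` of `ℂ[s,t]` with the Euler derivation. -/
def detEuler (η : Fin 2 → S2) : S2 := η 0 * X 1 - η 1 * X 0

lemma lin2_dvd_detEuler {u : Fin 2 → ℂ} (hu : u ≠ 0) {η : Fin 2 → S2}
    (h : lin2 u ∣ ev2 η u) : lin2 u ∣ detEuler η := by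
  have hev : ev2 η u = C (u 0) * η 0 + C (u 1) * η 1 := Fin.sum_univ_two _
  have hlin : lin2 u = C (u 0) * X 0 + C (u 1) * X 1 := Fin.sum_univ_two _
  obtain ⟨k, hk⟩ := Function.ne_iff.mp hu
  refine ((Ne.isUnit hk).map C).dvd_mul_left.mp ?_
  fin_cases k
  · have : C (u 0) * detEuler η = X 1 * ev2 η u - η 1 * lin2 u := by
      rw [detEuler, hev, hlin]; ring
    exact this ▸ dvd_sub (h.mul_left _) (dvd_mul_left _ _)
  · have : C (u 1) * detEuler η = η 0 * lin2 u - X 0 * ev2 η u := by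
      rw [detEuler, hev, hlin]; ring
    exact this ▸ dvd_sub (dvd_mul_left _ _) (h.mul_left _)

/-- Coefficients of the binary linear form vanishing at `s`. -/
def vanishingForm (s : Fin 2 → ℂ) : Fin 2 → ℂ := ![-s 1, s 0]

lemma vanishingForm_ne_zero {s : Fin 2 → ℂ} (hs : s ≠ 0) : vanishingForm s ≠ 0 := by
  intro h
  refine hs (funext fun k => ?_)
  fin_cases k
  · simpa [vanishingForm] using congrFun h 1
  · simpa [vanishingForm] using congrFun h 0

lemma eq_smul_of_vanishingForm_eq_smul {s s' : Fin 2 → ℂ} {μ : ℂ}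
    (h : vanishingForm s' = μ • vanishingForm s) : s' = μ • s := by
  funext k
  fin_cases k
  · simpa [vanishingForm] using congrFun h 1
  · simpa [vanishingForm] using congrFun h 0

lemma exists_eq_smul_vanishingForm {s u : Fin 2 → ℂ} (hs : s ≠ 0)
    (h : ∑ k, u k * s k = 0) : ∃ μ : ℂ, u = μ • vanishingForm s := by
  rw [Fin.sum_univ_two] at h
  by_cases hs0 : s 0 = 0
  · have hs1 : s 1 ≠ 0 := fun hs1 => hs (funext fun k => by fin_cases k <;> simp [hs0, hs1])
    have hu1 : u 1 = 0 := by simpa [hs0, hs1] using h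
    refine ⟨-u 0 / s 1, funext fun k => ?_⟩
    fin_cases k
    · show u 0 = -u 0 / s 1 * -s 1
      field_simp
    · show u 1 = -u 0 / s 1 * s 0
      rw [hu1, hs0, mul_zero]
  · refine ⟨u 1 / s 0, funext fun k => ?_⟩
    fin_cases k
    · show u 0 = u 1 / s 0 * -s 1
      field_simp
      linear_combination h
    · show u 1 = u 1 / s 0 * s 0
      field_simp

/-- A basis `b` of the plane `v = 0` together with linear forms `d` such that `d, v` is the basis
dual to `b, e`. -/
structure AdaptedFrame (v : Fin 3 → ℂ) where
  b : Fin 2 → Fin 3 → ℂ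
  d : Fin 2 → Fin 3 → ℂ
  e : Fin 3 → ℂ
  sum_outer : ∀ i j, ∑ k, b k i * d k j + e i * v j = if i = j then 1 else 0
  orth : ∀ k, ∑ i, v i * b k i = 0
  dual : ∀ k l, ∑ i, d k i * b l i = if k = l then 1 else 0

namespace AdaptedFrame

lemma nonempty {v : Fin 3 → ℂ} (hv : v ≠ 0) : Nonempty (AdaptedFrame v) := by
  obtain ⟨i₀, hi₀⟩ := Function.ne_iff.mp hv
  fin_cases i₀ <;> simp only [Fin.zero_eta, Fin.mk_one, Fin.reduceFinMk, Pi.zero_apply] at hi₀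
  on_goal 3 => refine ⟨⟨![![1, 0, -(v 0 / v 2)], ![0, 1, -(v 1 / v 2)]], ![![1, 0, 0], ![0, 1, 0]],
    ![0, 0, (v 2)⁻¹], ?_, ?_, ?_⟩⟩
  on_goal 2 => refine ⟨⟨![![1, -(v 0 / v 1), 0], ![0, -(v 2 / v 1), 1]], ![![1, 0, 0], ![0, 0, 1]],
    ![0, (v 1)⁻¹, 0], ?_, ?_, ?_⟩⟩
  on_goal 1 => refine ⟨⟨![![-(v 1 / v 0), 1, 0], ![-(v 2 / v 0), 0, 1]], ![![0, 1, 0], ![0, 0, 1]],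
    ![(v 0)⁻¹, 0, 0], ?_, ?_, ?_⟩⟩
  all_goals simp [Fin.forall_fin_succ, Fin.sum_univ_succ, div_eq_inv_mul, hi₀]

variable {v : Fin 3 → ℂ} (F : AdaptedFrame v)

lemma eq_sum_of_sum_smul_eq_zero {M : Type*} [AddCommGroup M] [Module ℂ M] {x : Fin 3 → M}
    (hx : ∑ j, v j • x j = 0) (i : Fin 3) : x i = ∑ k, F.b k i • ∑ j, F.d k j • x j := by
  calc x i = ∑ j, (if i = j then (1 : ℂ) else 0) • x j := by simp
    _ = ∑ j, (∑ k, F.b k i * F.d k j + F.e i * v j) • x j := by simp only [F.sum_outer]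
    _ = ∑ k, F.b k i • ∑ j, F.d k j • x j + F.e i • ∑ j, v j • x j := by
      simp only [add_smul, Finset.sum_add_distrib, Finset.sum_smul, mul_smul, Finset.smul_sum]
      rw [Finset.sum_comm]
    _ = _ := by rw [hx, smul_zero, add_zero]

lemma eq_smul_of_restrForm_eq_zero {w : Fin 3 → ℂ} (hw : restrForm F.b w = 0) :
    w = (∑ i, w i * F.e i) • v := by
  funext j
  calc w j = ∑ i, w i * (if i = j then 1 else 0) := by simp
    _ = ∑ i, w i * (∑ k, F.b k i * F.d k j + F.e i * v j) := by simp only [F.sum_outer]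
    _ = ∑ k, restrForm F.b w k * F.d k j + (∑ i, w i * F.e i) * v j := by
      simp only [restrForm, mul_add, Finset.sum_add_distrib, Finset.mul_sum, Finset.sum_mul,
        mul_assoc]
      rw [Finset.sum_comm]
    _ = _ := by simp [hw]

lemma restrForm_self : restrForm F.b v = 0 := funext F.orth

lemma restrForm_ne_zero {A : Arr} (hv : v ∈ A.hyps) {w : Fin 3 → ℂ} (hw : w ∈ A.hyps)
    (hwv : w ≠ v) : restrForm F.b w ≠ 0 :=
  fun h => hwv (A.nonprop v hv w hw ⟨_, F.eq_smul_of_restrForm_eq_zero h⟩)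

/-- Restriction of polynomials to the plane `v = 0`, parametrized by `(s, t) ↦ s b₀ + t b₁`. -/
def restr : S3 →ₐ[ℂ] S2 := aeval fun i => lin2 fun k => F.b k i

lemma restr_C (c : ℂ) : F.restr (C c) = C c := by
  simp [restr]

lemma restr_lin3 (w : Fin 3 → ℂ) : F.restr (lin3 w) = lin2 (restrForm F.b w) := by
  simp only [restr, lin3, lin2, restrForm, map_sum, map_mul, aeval_C, aeval_X, algebraMap_eq,
    Finset.mul_sum, Finset.sum_mul, mul_assoc]
  rw [Finset.sum_comm]

lemma restr_ev3 (θ : Fin 3 → S3) (w : Fin 3 → ℂ) :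
    F.restr (ev3 θ w) = ∑ i, w i • F.restr (θ i) := by
  simp only [ev3, map_sum, C_mul', map_smul]

lemma isHomogeneous_restr {f : S3} {n : ℕ} (hf : f.IsHomogeneous n) :
    (F.restr f).IsHomogeneous n := by
  simpa [restr] using hf.aeval _ fun i => isHomogeneous_lin2 fun k => F.b k i

/-- The restriction of a derivation `θ` to the plane `v = 0`, in the coordinates `d`. -/
def restrDer (θ : Fin 3 → S3) : Fin 2 → S2 := fun k => F.restr (ev3 θ (F.d k))

lemma restr_eq_sum_restrDer {θ : Fin 3 → S3} (hθ : lin3 v ∣ ev3 θ v) (i : Fin 3) :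
    F.restr (θ i) = ∑ k, F.b k i • F.restrDer θ k := by
  have hx : ∑ j, v j • F.restr (θ j) = 0 := by
    obtain ⟨g, hg⟩ := hθ
    rw [← restr_ev3, hg, map_mul, restr_lin3, restrForm_self]
    simp [lin2]
  rw [F.eq_sum_of_sum_smul_eq_zero hx i]
  simp only [restrDer, restr_ev3]

lemma restr_ev3_eq_ev2 {θ : Fin 3 → S3} (hθ : lin3 v ∣ ev3 θ v) (w : Fin 3 → ℂ) :
    F.restr (ev3 θ w) = ev2 (F.restrDer θ) (restrForm F.b w) := by
  simp only [restr_ev3, F.restr_eq_sum_restrDer hθ, ev2, restrForm, Finset.smul_sum, smul_smul,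
    C_mul', Finset.sum_smul]
  rw [Finset.sum_comm]

lemma lin2_restrForm_dvd_detEuler {A : Arr} (hv : v ∈ A.hyps) {θ : Fin 3 → S3} (hθ : θ ∈ DA A)
    {w : Fin 3 → ℂ} (hw : w ∈ A.hyps) (hwv : w ≠ v) :
    lin2 (restrForm F.b w) ∣ detEuler (F.restrDer θ) := by
  refine lin2_dvd_detEuler (F.restrForm_ne_zero hv hw hwv) ?_
  rw [← F.restr_ev3_eq_ev2 (hθ v hv), ← restr_lin3]
  exact map_dvd F.restr (hθ w hw)

lemma isHomogeneous_detEuler_restrDer {θ : Fin 3 → S3} {n : ℕ} (hθ : HomDeg3 θ n) :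
    (detEuler (F.restrDer θ)).IsHomogeneous (n + 1) := by
  have hcomp (k : Fin 2) : (F.restrDer θ k).IsHomogeneous n :=
    F.isHomogeneous_restr (IsHomogeneous.sum _ _ _ fun i _ => (hθ i).C_mul _)
  exact ((hcomp 0).mul (isHomogeneous_X _ _)).sub ((hcomp 1).mul (isHomogeneous_X _ _))

def kerDetEuler : Submodule S3 (Fin 3 → S3) where
  carrier := {θ | detEuler (F.restrDer θ) = 0}
  add_mem' {θ η} hθ hη := by
    simp only [Set.mem_ofPred_eq, detEuler, restrDer, ev3_add, map_add] at *
    linear_combination hθ + hη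
  zero_mem' := by simp [detEuler, restrDer, ev3]
  smul_mem' c θ hθ := by
    simp only [Set.mem_ofPred_eq, detEuler, restrDer, ev3_smul, map_mul] at *
    linear_combination F.restr c * hθ

lemma eulerD_mem_kerDetEuler : eulerD ∈ F.kerDetEuler := by
  have hcomp (k : Fin 2) : F.restrDer eulerD k = X k := by
    rw [restrDer, show ev3 eulerD (F.d k) = lin3 (F.d k) from rfl, restr_lin3]
    simp [restrForm, F.dual, lin2]
  show detEuler (F.restrDer eulerD) = 0
  rw [detEuler, hcomp, hcomp, mul_comm, sub_self]

lemma exists_mem_DA_notMem_kerDetEuler {A : Arr} (hv : v ∈ A.hyps) :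
    ∃ θ ∈ DA A, θ ∉ F.kerDetEuler := by
  set P := ∏ w ∈ A.hyps.erase v, lin3 w
  have hev (w : Fin 3 → ℂ) : ev3 (P • fun i => C (F.b 0 i)) w = P * C (restrForm F.b w 0) := by
    rw [ev3_smul]
    simp [ev3, restrForm, map_sum]
  refine ⟨P • fun i => C (F.b 0 i), fun w hw => ?_, fun h => ?_⟩
  · rw [hev]
    obtain rfl | hwv := eq_or_ne w v
    · simp [restrForm_self]
    · exact (Finset.dvd_prod_of_mem _ (Finset.mem_erase.mpr ⟨hwv, hw⟩)).mul_right _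
  · have hcomp (k : Fin 2) :
        F.restrDer (P • fun i => C (F.b 0 i)) k = F.restr P * C (if k = 0 then 1 else 0) := by
      rw [restrDer, hev, map_mul, restr_C]
      simp [restrForm, F.dual]
    have hP : F.restr P ≠ 0 := by
      simp only [P, map_prod, restr_lin3]
      exact Finset.prod_ne_zero_iff.mpr fun w hw => lin2_ne_zero <|
        F.restrForm_ne_zero hv (Finset.mem_of_mem_erase hw) (Finset.ne_of_mem_erase hw)
    have : F.restr P * X 1 = 0 := by
      simpa [kerDetEuler, detEuler, hcomp] using h
    exact mul_ne_zero hP (X_ne_zero 1) this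

lemma exists_mem_detEuler_restrDer_ne_zero {A : Arr} (hv : v ∈ A.hyps) {G : Set (Fin 3 → S3)}
    (hG : Submodule.span S3 (insert eulerD G) = DA A) :
    ∃ θ ∈ G, detEuler (F.restrDer θ) ≠ 0 := by
  by_contra! hG0
  obtain ⟨θ, hθ, hθK⟩ := F.exists_mem_DA_notMem_kerDetEuler hv
  have hle : DA A ≤ F.kerDetEuler :=
    hG ▸ Submodule.span_le.mpr (Set.insert_subset F.eulerD_mem_kerDetEuler hG0)
  exact hθK (hle hθ)

/-- Coordinates of a point of the line `v = 0` with respect to the basis `b`. -/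
def coords (p : PP) : Fin 2 → ℂ := fun k => ∑ j, F.d k j * p.rep j

lemma rep_eq_sum_coords {p : PP} (hp : pOn v p) (i : Fin 3) :
    p.rep i = ∑ k, F.coords p k * F.b k i := by
  simpa [coords, mul_comm] using F.eq_sum_of_sum_smul_eq_zero (x := p.rep) hp i

lemma coords_ne_zero {p : PP} (hp : pOn v p) : F.coords p ≠ 0 := fun h =>
  p.rep_nonzero (funext fun i => by simp [F.rep_eq_sum_coords hp i, h])

lemma eq_of_coords_eq_smul {p q : PP} (hp : pOn v p) (hq : pOn v q) {μ : ℂ}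
    (h : F.coords q = μ • F.coords p) : q = p := by
  rw [← p.mk_rep, ← q.mk_rep, Projectivization.mk_eq_mk_iff']
  refine ⟨μ, funext fun i => ?_⟩
  simp [F.rep_eq_sum_coords hp, F.rep_eq_sum_coords hq, h, mul_add, mul_assoc]

lemma sum_restrForm_mul_coords {p : PP} (hp : pOn v p) {w : Fin 3 → ℂ} (hw : pOn w p) :
    ∑ k, restrForm F.b w k * F.coords p k = 0 := by
  rw [← hw]
  simp only [restrForm, F.rep_eq_sum_coords hp, Finset.mul_sum, Finset.sum_mul]
  rw [Finset.sum_comm]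
  exact Finset.sum_congr rfl fun i _ => Finset.sum_congr rfl fun k _ => by ring

lemma nPoints_le {A : Arr} (hv : v ∈ A.hyps) {θ : Fin 3 → S3} (hθ : θ ∈ DA A) {n : ℕ}
    (hn : HomDeg3 θ n) (hθ0 : detEuler (F.restrDer θ) ≠ 0) : nPoints A v ≤ n + 1 := by
  refine Set.ncard_le_of_forall_finset_card_le fun t ht => ?_
  set f : PP → Fin 2 → ℂ := fun p => vanishingForm (F.coords p)
  have hf {p q : PP} (hp : p ∈ t) (hq : q ∈ t) {μ : ℂ} (h : f q = μ • f p) : q = p :=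
    F.eq_of_coords_eq_smul (ht hp).1 (ht hq).1 (eq_smul_of_vanishingForm_eq_smul h)
  rw [← Finset.card_image_of_injOn (f := f)
    fun p hp q hq h => hf hq hp (μ := 1) (by simpa using h)]
  refine card_le_of_lin2_dvd (F.isHomogeneous_detEuler_restrDer hn) hθ0 ?_ ?_ ?_
  · simpa using fun p hp => vanishingForm_ne_zero (F.coords_ne_zero (ht hp).1)
  · simpa using fun p hp q hq μ h => by rw [hf hp hq h]
  · simp only [Finset.mem_image, forall_exists_index, and_imp, forall_apply_eq_imp_iff₂]
    intro p hp
    obtain ⟨hpv, w, hw, hwv, hpw⟩ := ht hp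
    obtain ⟨μ, hμ⟩ := exists_eq_smul_vanishingForm (F.coords_ne_zero hpv)
      (F.sum_restrForm_mul_coords hpv hpw)
    refine dvd_trans ⟨C μ, ?_⟩ (F.lin2_restrForm_dvd_detEuler hv hθ hw hwv)
    rw [hμ, lin2_smul, mul_comm]

end AdaptedFrame

/-- Let `A` be a nearly free line arrangement in `ℂ³` with exponents
`(a, b)`, `a ≤ b`. Then for every `H ∈ A`, `n_H ≤ b + 1`. -/
theorem stmt6 (A : Arr) (a b : ℕ) (hab : a ≤ b) (hnf : IsNearlyFree A a b) :
    ∀ v ∈ A.hyps, nPoints A v ≤ b + 1 := by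
  intro v hv
  obtain ⟨θ₂, θ₃, φ, h₂, h₃, hφ, hspan, -⟩ := hnf
  obtain ⟨F⟩ := AdaptedFrame.nonempty (A.forms_ne v hv)
  obtain ⟨θ, hθG, hθ⟩ := F.exists_mem_detEuler_restrDer_ne_zero hv hspan
  have hθA : θ ∈ DA A := hspan ▸ Submodule.subset_span (Set.mem_insert_of_mem _ hθG)
  rcases hθG with rfl | rfl | rfl
  · exact (F.nPoints_le hv hθA h₂ hθ).trans (by omega)
  · exact F.nPoints_le hv hθA h₃ hθ
  · exact F.nPoints_le hv hθA hφ hθ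
end
end

section
/- Let k be a field and R = k[x, y] graded standardly. Let M be a free graded rank-2 R-module with homogeneous basis {θ₁, θ₂}, and let P ⊆ M be a graded submodule containing θ₁ such that dim_k(M/P) < ∞. If every element of P has θ₂-coefficient lying in the ideal generated by a fixed nonzero linear form α together with y^m for the minimal m ≥ 1 with y^m θ₂ ∈ P (where α = ax+by, a ≠ 0), then P is generated over R by {θ₁, αθ₂, y^m θ₂}. -/
open MvPolynomial

/-- Let `k` be a field, `R = k[x, y]`, and `M` a free `R`-module of
rank 2 with basis `{θ₁, θ₂}`. Let `P ⊆ M` be a submodule containing `θ₁` with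
`dim_k(M/P) < ∞`. Let `α = ax + by` (`a ≠ 0`) be a nonzero linear form and let `m ≥ 1`
be minimal with `yᵐθ₂ ∈ P`. If every element of `P` has `θ₂`-coefficient lying in the
ideal `(α, yᵐ)`, then `P` is generated over `R` by `{θ₁, αθ₂, yᵐθ₂}`. -/
theorem stmt14 (k : Type*) [Field k]
    (M : Type*) [AddCommGroup M] [Module (MvPolynomial (Fin 2) k) M]
    [Module k M] [IsScalarTower k (MvPolynomial (Fin 2) k) M]
    (θ₁ θ₂ : M)
    (hgen : ∀ z : M, ∃ f g : MvPolynomial (Fin 2) k, z = f • θ₁ + g • θ₂)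
    (hindep : ∀ f g : MvPolynomial (Fin 2) k, f • θ₁ + g • θ₂ = 0 → f = 0 ∧ g = 0)
    (P : Submodule (MvPolynomial (Fin 2) k) M)
    (hθ₁ : θ₁ ∈ P)
    (hfin : FiniteDimensional k (M ⧸ P))
    (a b : k) (ha : a ≠ 0) (m : ℕ) (hm : 1 ≤ m)
    (hmem : ((X 1 : MvPolynomial (Fin 2) k) ^ m) • θ₂ ∈ P)
    (hmin : ∀ j : ℕ, ((X 1 : MvPolynomial (Fin 2) k) ^ j) • θ₂ ∈ P → m ≤ j)
    (hαP : (C a * X 0 + C b * X 1 : MvPolynomial (Fin 2) k) • θ₂ ∈ P)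
    (hcoef : ∀ f g : MvPolynomial (Fin 2) k, f • θ₁ + g • θ₂ ∈ P →
      g ∈ Ideal.span ({C a * X 0 + C b * X 1, (X 1 : MvPolynomial (Fin 2) k) ^ m} :
        Set (MvPolynomial (Fin 2) k))) :
    P = Submodule.span (MvPolynomial (Fin 2) k)
      ({θ₁, (C a * X 0 + C b * X 1 : MvPolynomial (Fin 2) k) • θ₂,
        ((X 1 : MvPolynomial (Fin 2) k) ^ m) • θ₂} : Set M) := by
  apply le_antisymm
  · intro z hz
    obtain ⟨f, g, rfl⟩ := hgen z
    obtain ⟨p, q, hpq⟩ := Ideal.mem_span_pair.mp (hcoef f g hz)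
    have h1 : θ₁ ∈ Submodule.span (MvPolynomial (Fin 2) k)
        ({θ₁, (C a * X 0 + C b * X 1 : MvPolynomial (Fin 2) k) • θ₂,
          ((X 1 : MvPolynomial (Fin 2) k) ^ m) • θ₂} : Set M) :=
      Submodule.subset_span (by simp)
    have h2 : (C a * X 0 + C b * X 1 : MvPolynomial (Fin 2) k) • θ₂ ∈
        Submodule.span (MvPolynomial (Fin 2) k)
        ({θ₁, (C a * X 0 + C b * X 1 : MvPolynomial (Fin 2) k) • θ₂,
          ((X 1 : MvPolynomial (Fin 2) k) ^ m) • θ₂} : Set M) :=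
      Submodule.subset_span (by simp)
    have h3 : ((X 1 : MvPolynomial (Fin 2) k) ^ m) • θ₂ ∈
        Submodule.span (MvPolynomial (Fin 2) k)
        ({θ₁, (C a * X 0 + C b * X 1 : MvPolynomial (Fin 2) k) • θ₂,
          ((X 1 : MvPolynomial (Fin 2) k) ^ m) • θ₂} : Set M) :=
      Submodule.subset_span (by simp)
    have : f • θ₁ + g • θ₂ = f • θ₁ + p • ((C a * X 0 + C b * X 1 : MvPolynomial (Fin 2) k) • θ₂)
        + q • (((X 1 : MvPolynomial (Fin 2) k) ^ m) • θ₂) := by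
      rw [smul_smul, smul_smul, add_assoc, ← add_smul, hpq]
    rw [this]
    exact add_mem (add_mem (Submodule.smul_mem _ _ h1) (Submodule.smul_mem _ _ h2))
      (Submodule.smul_mem _ _ h3)
  · rw [Submodule.span_le]
    intro z hz
    simp only [Set.mem_insert_iff, Set.mem_singleton_iff] at hz
    rcases hz with rfl | rfl | rfl
    · exact hθ₁
    · exact hαP
    · exact hmem
end
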